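/- Let θ ∈ (0,π)³ with θ₁ ≤ θ₂ ≤ θ₃ and θ₁+θ₂+θ₃ ∈ πℤ. The stabilizer in SU(3) of the ordered pair (V₀, V_θ) is isomorphic to SO(3) if and only if θ₁ = θ₂ = θ₃ (in which case all angles equal π/3 or 2π/3). -/

import Mathlib

open scoped Real ComplexConjugate
open Finset

/-- The standard real subspace `V₀ = ℝⁿ ⊂ ℂⁿ`, the real span of the standard basis. -/
noncomputable def V0 (n : ℕ) : Submodule ℝ (Fin n → ℂ) :=
  Submodule.span ℝ (Set.range fun j => (Pi.single j 1 : Fin n → ℂ))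

/-- The plane `V_θ = {(e^{iθ₁}x₁, …, e^{iθₙ}xₙ) : xⱼ ∈ ℝ}`, i.e. the real span of the vectors
`e^{iθⱼ} eⱼ`. -/
noncomputable def Vtheta (n : ℕ) (θ : Fin n → ℝ) : Submodule ℝ (Fin n → ℂ) :=
  Submodule.span ℝ (Set.range fun j => (Pi.single j (Complex.exp (θ j * Complex.I)) : Fin n → ℂ))

/-- The standard symplectic form `ω₀ = Im h` on `ℂⁿ`, `h` being the standard Hermitian metric. -/
noncomputable def omega0 {n : ℕ} (z w : Fin n → ℂ) : ℝ :=
  (∑ j, conj (z j) * w j).im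

/-- `ω₀` vanishes identically on `V`. -/
def OmegaVanishes {n : ℕ} (V : Submodule ℝ (Fin n → ℂ)) : Prop :=
  ∀ v ∈ V, ∀ w ∈ V, omega0 v w = 0

/-- `Im Ω₀` vanishes identically on `V`, where `Ω₀ = dz₁ ∧ ⋯ ∧ dzₙ` is the standard holomorphic
volume form: for any `n` vectors of `V` the determinant they span has vanishing imaginary part. -/
def ImVolVanishes {n : ℕ} (V : Submodule ℝ (Fin n → ℂ)) : Prop :=
  ∀ b : Fin n → (Fin n → ℂ), (∀ i, b i ∈ V) → ((Matrix.of fun i j => b i j).det).im = 0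

/-- A real `n`-dimensional subspace of `ℂⁿ` is special Lagrangian if `ω₀` and `Im Ω₀` vanish
identically on it. -/
def IsSpecialLagrangian (n : ℕ) (V : Submodule ℝ (Fin n → ℂ)) : Prop :=
  Module.finrank ℝ V = n ∧ OmegaVanishes V ∧ ImVolVanishes V


/-- The action of a complex `n×n` matrix on `ℂⁿ`, as a real-linear map. -/
noncomputable def actL {n : ℕ} (M : Matrix (Fin n) (Fin n) ℂ) :
    (Fin n → ℂ) →ₗ[ℝ] (Fin n → ℂ) :=
  (Matrix.mulVecLin M).restrictScalars ℝ

lemma actL_mul {n : ℕ} (M N : Matrix (Fin n) (Fin n) ℂ) :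
    actL (M * N) = (actL M).comp (actL N) := by
  ext v
  simp [actL, Matrix.mulVecLin_mul]

lemma actL_one {n : ℕ} : actL (1 : Matrix (Fin n) (Fin n) ℂ) = LinearMap.id := by
  ext v
  simp [actL]

/-- The stabilizer in `SU(3)` of the ordered pair of subspaces `(V₀, V_θ)`, realized as a
subgroup of the unitary group `U(3)` (its elements have determinant one, i.e. lie in `SU(3)`). -/
noncomputable def stabSU (θ : Fin 3 → ℝ) : Subgroup (Matrix.unitaryGroup (Fin 3) ℂ) where
  carrier := {B | (B : Matrix (Fin 3) (Fin 3) ℂ).det = 1 ∧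
    Submodule.map (actL (B : Matrix (Fin 3) (Fin 3) ℂ)) (V0 3) = V0 3 ∧
    Submodule.map (actL (B : Matrix (Fin 3) (Fin 3) ℂ)) (Vtheta 3 θ) = Vtheta 3 θ}
  one_mem' := by
    refine ⟨by simp, ?_, ?_⟩ <;>
      simp [actL_one, Submodule.map_id, OneMemClass.coe_one]
  mul_mem' := by
    rintro a b ⟨ha1, ha2, ha3⟩ ⟨hb1, hb2, hb3⟩
    refine ⟨by simp [MulMemClass.coe_mul, Matrix.det_mul, ha1, hb1], ?_, ?_⟩
    · rw [MulMemClass.coe_mul, actL_mul, Submodule.map_comp, hb2, ha2]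
    · rw [MulMemClass.coe_mul, actL_mul, Submodule.map_comp, hb3, ha3]
  inv_mem' := by
    rintro a ⟨ha1, ha2, ha3⟩
    have hinv : ((a⁻¹ : Matrix.unitaryGroup (Fin 3) ℂ) : Matrix (Fin 3) (Fin 3) ℂ) *
        (a : Matrix (Fin 3) (Fin 3) ℂ) = 1 := by
      rw [← MulMemClass.coe_mul, inv_mul_cancel, OneMemClass.coe_one]
    have hdet : ((a⁻¹ : Matrix.unitaryGroup (Fin 3) ℂ) : Matrix (Fin 3) (Fin 3) ℂ).det = 1 := by
      have := congrArg Matrix.det hinv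
      rw [Matrix.det_mul, ha1, mul_one, Matrix.det_one] at this
      exact this
    refine ⟨hdet, ?_, ?_⟩
    · conv_lhs => rw [← ha2]
      rw [← Submodule.map_comp, ← actL_mul, hinv, actL_one, Submodule.map_id]
    · conv_lhs => rw [← ha3]
      rw [← Submodule.map_comp, ← actL_mul, hinv, actL_one, Submodule.map_id]

/-- `SO(3)` as the subgroup of the orthogonal group `O(3)` of matrices of determinant one. -/
noncomputable def SO3 : Subgroup (Matrix.orthogonalGroup (Fin 3) ℝ) where
  carrier := {A | (A : Matrix (Fin 3) (Fin 3) ℝ).det = 1}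
  one_mem' := by simp
  mul_mem' := by
    intro a b ha hb
    simp only [Set.mem_setOf_eq, MulMemClass.coe_mul, Matrix.det_mul] at *
    rw [ha, hb, mul_one]
  inv_mem' := by
    intro a ha
    have hinv : ((a⁻¹ : Matrix.orthogonalGroup (Fin 3) ℝ) : Matrix (Fin 3) (Fin 3) ℝ) *
        (a : Matrix (Fin 3) (Fin 3) ℝ) = 1 := by
      rw [← MulMemClass.coe_mul, inv_mul_cancel, OneMemClass.coe_one]
    have := congrArg Matrix.det hinv
    simp only [Set.mem_setOf_eq] at *
    rw [Matrix.det_mul, ha, mul_one, Matrix.det_one] at this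
    exact this

/-! Every element of the stabilizer maps the real basis vectors into `ℝ³`, so it is a real
matrix `A ∈ SO(3)`; it then maps `e^{iθⱼ}eⱼ` to a vector whose `k`-th coordinate, rotated back
by `e^{-iθₖ}`, has imaginary part `Aₖⱼ sin (θⱼ - θₖ)`. As the angles lie in `(0, π)`, this forces
`Aₖⱼ = 0` whenever `θⱼ ≠ θₖ`, and conversely every such `A` lies in the stabilizer. If all the
angles are equal the stabilizer is therefore `SO(3)` itself. Otherwise some angle `θ_c` differs
from the other two, and the diagonal matrix with entries `-1` off `c` and `1` at `c` is a
nontrivial central element of the stabilizer, whereas `SO(3)` has trivial center: a matrix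
commuting with quarter turns about two different axes is a scalar `a`, and `a ^ 3 = 1` forces
`a = 1`. Finally `3θ ∈ πℤ` with `θ ∈ (0, π)` leaves `θ = π/3` or `θ = 2π/3`. -/

open Matrix

section Planes

variable {n : ℕ}

@[simp]
theorem actL_apply (M : Matrix (Fin n) (Fin n) ℂ) (z : Fin n → ℂ) :
    actL M z = M *ᵥ z :=
  rfl

theorem mem_span_range_single_iff {ι : Type*} [Fintype ι] [DecidableEq ι] {c : ι → ℂ}
    (hc : ∀ j, c j ≠ 0) (z : ι → ℂ) :
    z ∈ Submodule.span ℝ (Set.range fun j => (Pi.single j (c j) : ι → ℂ)) ↔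
      ∀ j, (z j / c j).im = 0 := by
  constructor
  · intro hz
    induction hz using Submodule.span_induction with
    | mem x hx =>
      obtain ⟨i, rfl⟩ := hx
      intro j
      by_cases h : j = i
      · subst h; simp [hc]
      · simp [h]
    | zero => simp
    | add x y _ _ hx hy => intro j; simp [add_div, hx j, hy j]
    | smul r x _ hx => intro j; simp [Complex.real_smul, mul_div_assoc, hx j]
  · intro hz
    rw [← Finset.univ_sum_single z]
    refine Submodule.sum_mem _ fun j _ => ?_
    have hzj : z j = (z j / c j).re • c j := by
      have hre : ((z j / c j).re : ℂ) = z j / c j := Complex.ext (by simp) (by simp [hz j])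
      rw [Complex.real_smul, hre, div_mul_cancel₀ _ (hc j)]
    rw [hzj, Pi.single_smul']
    exact Submodule.smul_mem _ _ (Submodule.subset_span ⟨j, rfl⟩)

theorem mem_Vtheta_iff {θ : Fin n → ℝ} {z : Fin n → ℂ} :
    z ∈ Vtheta n θ ↔ ∀ j, (z j / Complex.exp (θ j * Complex.I)).im = 0 :=
  mem_span_range_single_iff (fun _ => Complex.exp_ne_zero _) z

theorem mem_V0_iff {z : Fin n → ℂ} : z ∈ V0 n ↔ ∀ j, (z j).im = 0 := by
  rw [V0]
  simpa using mem_span_range_single_iff (c := fun _ => (1 : ℂ)) (fun _ => one_ne_zero) z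

theorem V0_eq_Vtheta_zero : V0 n = Vtheta n 0 := by
  simp [V0, Vtheta]

theorem actL_injective {M : Matrix (Fin n) (Fin n) ℂ}
    (hM : M ∈ unitaryGroup (Fin n) ℂ) : Function.Injective (actL M) := by
  intro z w h
  have := congrArg (star M *ᵥ ·) h
  simpa [mulVec_mulVec, mem_unitaryGroup_iff'.mp hM] using this

theorem map_actL_eq_of_le {M : Matrix (Fin n) (Fin n) ℂ}
    (hM : M ∈ unitaryGroup (Fin n) ℂ) {V : Submodule ℝ (Fin n → ℂ)}
    (h : V.map (actL M) ≤ V) : V.map (actL M) = V :=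
  Submodule.eq_of_le_of_finrank_eq h
    (LinearEquiv.finrank_eq (Submodule.equivMapOfInjective _ (actL_injective hM) V)).symm

theorem map_Vtheta_le_of_forall_eq_zero {θ : Fin n → ℝ} {A : Matrix (Fin n) (Fin n) ℝ}
    (hA : ∀ k j, θ j ≠ θ k → A k j = 0) :
    (Vtheta n θ).map (actL (A.map (↑))) ≤ Vtheta n θ := by
  rintro _ ⟨z, hz, rfl⟩
  rw [SetLike.mem_coe, mem_Vtheta_iff] at hz
  rw [actL_apply, mem_Vtheta_iff]
  intro k
  simp only [mulVec, dotProduct, map_apply, Finset.sum_div, Complex.im_sum, mul_div_assoc,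
    Complex.im_ofReal_mul]
  refine Finset.sum_eq_zero fun j _ => ?_
  by_cases h : θ j = θ k
  · rw [← h, hz j, mul_zero]
  · rw [hA k j h, zero_mul]

theorem eq_zero_of_map_Vtheta_le {θ : Fin n → ℝ} {j k : Fin n}
    (hj : θ j ∈ Set.Ioo 0 π) (hk : θ k ∈ Set.Ioo 0 π) (hjk : θ j ≠ θ k)
    {A : Matrix (Fin n) (Fin n) ℝ} (hA : (Vtheta n θ).map (actL (A.map (↑))) ≤ Vtheta n θ) :
    A k j = 0 := by
  have hmem := hA (Submodule.mem_map_of_mem (Submodule.subset_span ⟨j, rfl⟩))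
  rw [actL_apply, mulVec_single, mem_Vtheta_iff] at hmem
  have hsin : Real.sin (θ j - θ k) ≠ 0 := by
    rw [Ne, Real.sin_eq_zero_iff_of_lt_of_lt (by linarith [hj.1, hk.2]) (by linarith [hj.2, hk.1]),
      sub_eq_zero]
    exact hjk
  have := hmem k
  simp only [Pi.smul_apply, col_apply, map_apply, MulOpposite.smul_eq_mul_unop,
    MulOpposite.unop_op] at this
  rw [mul_div_assoc, ← Complex.exp_sub, ← sub_mul, ← Complex.ofReal_sub,
    Complex.im_ofReal_mul, Complex.exp_ofReal_mul_I_im] at this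
  exact (mul_eq_zero.mp this).resolve_right hsin

theorem exists_map_ofReal_eq_of_map_V0_le {B : Matrix (Fin n) (Fin n) ℂ}
    (h : (V0 n).map (actL B) ≤ V0 n) : ∃ A : Matrix (Fin n) (Fin n) ℝ, A.map (↑) = B := by
  refine ⟨B.map Complex.re, ?_⟩
  ext i j
  have hmem := h (Submodule.mem_map_of_mem (Submodule.subset_span ⟨j, rfl⟩))
  rw [actL_apply, mulVec_single_one, mem_V0_iff] at hmem
  exact Complex.ext rfl (by simpa using (hmem i).symm)

end Planes

theorem map_ofReal_mem_unitaryGroup_iff {m : Type*} [Fintype m] [DecidableEq m]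
    {A : Matrix m m ℝ} : A.map (↑) ∈ unitaryGroup m ℂ ↔ A ∈ orthogonalGroup m ℝ := by
  have hstar : star (A.map ((↑) : ℝ → ℂ)) = Aᵀ.map (↑) := by
    ext i j; simp
  have hmul : A.map ((↑) : ℝ → ℂ) * Aᵀ.map (↑) = (A * Aᵀ).map (↑) :=
    (Matrix.map_mul (f := Complex.ofRealHom)).symm
  rw [mem_unitaryGroup_iff, mem_orthogonalGroup_iff, hstar, hmul,
    ← (Matrix.map_injective Complex.ofReal_injective).eq_iff, Matrix.map_one _ rfl rfl]

theorem det_map_ofReal {m : Type*} [Fintype m] [DecidableEq m] (A : Matrix m m ℝ) :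
    (A.map ((↑) : ℝ → ℂ)).det = A.det :=
  (Complex.ofRealHom.map_det A).symm

section Stabilizer

variable {θ : Fin 3 → ℝ} {B : unitaryGroup (Fin 3) ℂ}

theorem mem_stabSU_of_map_ofReal_eq {A : Matrix (Fin 3) (Fin 3) ℝ}
    (hAB : A.map (↑) = (B : Matrix (Fin 3) (Fin 3) ℂ)) (hdet : A.det = 1)
    (hA : ∀ k j, θ j ≠ θ k → A k j = 0) : B ∈ stabSU θ := by
  refine ⟨by rw [← hAB, det_map_ofReal, hdet, Complex.ofReal_one],
    map_actL_eq_of_le B.2 ?_, map_actL_eq_of_le B.2 ?_⟩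
  · rw [V0_eq_Vtheta_zero, ← hAB]
    exact map_Vtheta_le_of_forall_eq_zero fun _ _ h => absurd rfl h
  · rw [← hAB]
    exact map_Vtheta_le_of_forall_eq_zero hA

theorem exists_map_ofReal_eq_of_mem_stabSU (hB : B ∈ stabSU θ) :
    ∃ A ∈ specialOrthogonalGroup (Fin 3) ℝ, A.map (↑) = (B : Matrix (Fin 3) (Fin 3) ℂ) := by
  obtain ⟨A, hAB⟩ := exists_map_ofReal_eq_of_map_V0_le hB.2.1.le
  refine ⟨A, mem_specialOrthogonalGroup_iff.mpr ⟨?_, ?_⟩, hAB⟩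
  · exact map_ofReal_mem_unitaryGroup_iff.mp (hAB ▸ B.2)
  · exact_mod_cast (det_map_ofReal A).symm.trans (hAB ▸ hB.1)

theorem apply_eq_zero_of_mem_stabSU (hθ : ∀ j, θ j ∈ Set.Ioo 0 π) (hB : B ∈ stabSU θ)
    {j k : Fin 3} (hjk : θ j ≠ θ k) : (B : Matrix (Fin 3) (Fin 3) ℂ) k j = 0 := by
  obtain ⟨A, -, hAB⟩ := exists_map_ofReal_eq_of_mem_stabSU hB
  have hVθ := hB.2.2.le
  rw [← hAB] at hVθ ⊢
  rw [map_apply, eq_zero_of_map_Vtheta_le (hθ j) (hθ k) hjk hVθ, Complex.ofReal_zero]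

end Stabilizer

section SignElement

theorem exists_forall_apply_eq_imp_eq {α : Type*} {f : Fin 3 → α}
    (hf : ¬(f 0 = f 1 ∧ f 1 = f 2)) : ∃ c, ∀ j, f j = f c → j = c := by
  by_cases h01 : f 0 = f 1
  · exact ⟨2, fun j hj => by fin_cases j <;> simp_all⟩
  by_cases h02 : f 0 = f 2
  · exact ⟨1, fun j hj => by fin_cases j <;> simp_all⟩
  · exact ⟨0, fun j hj => by fin_cases j <;> simp_all [eq_comm]⟩

def signDiag (c : Fin 3) : Matrix (Fin 3) (Fin 3) ℝ :=
  diagonal fun j => if j = c then 1 else -1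

theorem signDiag_mem_specialOrthogonalGroup (c : Fin 3) :
    signDiag c ∈ specialOrthogonalGroup (Fin 3) ℝ := by
  rw [mem_specialOrthogonalGroup_iff, mem_orthogonalGroup_iff]
  refine ⟨?_, ?_⟩
  · rw [signDiag, diagonal_transpose, diagonal_mul_diagonal, ← diagonal_one]
    congr 1
    ext j
    split_ifs <;> norm_num
  · fin_cases c <;> simp [signDiag, det_diagonal, Fin.prod_univ_three]

noncomputable def signElem (c : Fin 3) : unitaryGroup (Fin 3) ℂ :=
  ⟨(signDiag c).map (↑), map_ofReal_mem_unitaryGroup_iff.mpr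
    (mem_specialOrthogonalGroup_iff.mp (signDiag_mem_specialOrthogonalGroup c)).1⟩

theorem signElem_mem_stabSU (θ : Fin 3 → ℝ) (c : Fin 3) : signElem c ∈ stabSU θ :=
  mem_stabSU_of_map_ofReal_eq rfl
    (mem_specialOrthogonalGroup_iff.mp (signDiag_mem_specialOrthogonalGroup c)).2
    fun _ _ h => diagonal_apply_ne _ fun hkj => h (hkj ▸ rfl)

theorem signElem_ne_one (c : Fin 3) : signElem c ≠ 1 := by
  intro h
  have h1 := congrArg
    (fun B : unitaryGroup (Fin 3) ℂ => (B : Matrix (Fin 3) (Fin 3) ℂ) (c + 1) (c + 1)) h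
  have hc1 : c + 1 ≠ c := by fin_cases c <;> decide
  norm_num [signElem, signDiag, hc1] at h1

theorem commute_signElem_of_mem_stabSU {θ : Fin 3 → ℝ} (hθ : ∀ j, θ j ∈ Set.Ioo 0 π)
    {c : Fin 3} (hc : ∀ j, θ j = θ c → j = c) {B : unitaryGroup (Fin 3) ℂ}
    (hB : B ∈ stabSU θ) : B * signElem c = signElem c * B := by
  refine Subtype.ext ?_
  change (B : Matrix (Fin 3) (Fin 3) ℂ) * (signDiag c).map (↑) =
    (signDiag c).map (↑) * (B : Matrix (Fin 3) (Fin 3) ℂ)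
  ext k j
  rw [signDiag, diagonal_map Complex.ofReal_zero, mul_diagonal, diagonal_mul]
  by_cases h : θ j = θ k
  · have hjk : j = c ↔ k = c := ⟨fun hj => hc k (h ▸ hj ▸ rfl), fun hk => hc j (hk ▸ h)⟩
    simp only [hjk]
    ring
  · rw [apply_eq_zero_of_mem_stabSU hθ hB h, zero_mul, mul_zero]

theorem center_stabSU_ne_bot {θ : Fin 3 → ℝ} (hθ : ∀ j, θ j ∈ Set.Ioo 0 π)
    (hne : ¬(θ 0 = θ 1 ∧ θ 1 = θ 2)) : Subgroup.center (stabSU θ) ≠ ⊥ := by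
  obtain ⟨c, hc⟩ := exists_forall_apply_eq_imp_eq hne
  rw [Subgroup.ne_bot_iff_exists_ne_one]
  refine ⟨⟨⟨signElem c, signElem_mem_stabSU θ c⟩, Subgroup.mem_center_iff.mpr fun B => ?_⟩, ?_⟩
  · exact Subtype.ext (commute_signElem_of_mem_stabSU hθ hc B.2)
  · exact fun h => signElem_ne_one c (congrArg (fun x : Subgroup.center (stabSU θ) =>
      ((x : stabSU θ) : unitaryGroup (Fin 3) ℂ)) h)

end SignElement

def rotZ : Matrix (Fin 3) (Fin 3) ℝ := !![0, -1, 0; 1, 0, 0; 0, 0, 1]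

def rotX : Matrix (Fin 3) (Fin 3) ℝ := !![1, 0, 0; 0, 0, -1; 0, 1, 0]

theorem rotZ_mem_specialOrthogonalGroup : rotZ ∈ specialOrthogonalGroup (Fin 3) ℝ := by
  rw [mem_specialOrthogonalGroup_iff, mem_orthogonalGroup_iff]
  refine ⟨?_, ?_⟩
  · ext i j; fin_cases i <;> fin_cases j <;> simp [rotZ, mul_apply, Fin.sum_univ_three]
  · simp [rotZ, det_fin_three]

theorem rotX_mem_specialOrthogonalGroup : rotX ∈ specialOrthogonalGroup (Fin 3) ℝ := by
  rw [mem_specialOrthogonalGroup_iff, mem_orthogonalGroup_iff]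
  refine ⟨?_, ?_⟩
  · ext i j; fin_cases i <;> fin_cases j <;> simp [rotX, mul_apply, Fin.sum_univ_three]
  · simp [rotX, det_fin_three]

theorem eq_smul_one_of_commute_rotZ_rotX {C : Matrix (Fin 3) (Fin 3) ℝ}
    (hZ : C * rotZ = rotZ * C) (hX : C * rotX = rotX * C) : C = C 0 0 • 1 := by
  have hZ' := congrFun₂ hZ
  have hX' := congrFun₂ hX
  simp only [rotZ, rotX, mul_apply, of_apply, cons_val', cons_val_fin_one, Fin.sum_univ_three,
    Fin.isValue, cons_val_zero, cons_val_one, Matrix.cons_val, Fin.forall_fin_succ, cons_val_succ,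
    Fin.succ_zero_eq_one, Fin.succ_one_eq_two, IsEmpty.forall_iff, mul_zero, mul_one, zero_mul,
    one_mul, mul_neg, neg_mul, zero_add, add_zero, neg_inj, and_true, true_and] at hZ' hX'
  ext i j
  fin_cases i <;> fin_cases j <;> simp <;> linarith

theorem center_SO3_eq_bot : Subgroup.center SO3 = ⊥ := by
  rw [Subgroup.eq_bot_iff_forall]
  intro x hx
  have hcomm : ∀ M ∈ specialOrthogonalGroup (Fin 3) ℝ,
      ((x : orthogonalGroup (Fin 3) ℝ) : Matrix (Fin 3) (Fin 3) ℝ) * M = M * x := by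
    intro M hM
    obtain ⟨hO, hdet⟩ := mem_specialOrthogonalGroup_iff.mp hM
    exact congrArg (fun y : SO3 => ((y : orthogonalGroup (Fin 3) ℝ) : Matrix (Fin 3) (Fin 3) ℝ))
      (Subgroup.mem_center_iff.mp hx ⟨⟨M, hO⟩, hdet⟩).symm
  obtain ⟨a, ha⟩ : ∃ a : ℝ, ((x : orthogonalGroup (Fin 3) ℝ) : Matrix (Fin 3) (Fin 3) ℝ) = a • 1 :=
    ⟨_, eq_smul_one_of_commute_rotZ_rotX (hcomm _ rotZ_mem_specialOrthogonalGroup)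
      (hcomm _ rotX_mem_specialOrthogonalGroup)⟩
  have hcube : a ^ 3 = 1 ^ 3 := by
    have hdet : ((x : orthogonalGroup (Fin 3) ℝ) : Matrix (Fin 3) (Fin 3) ℝ).det = 1 := x.2
    rwa [ha, det_smul, det_one, mul_one, Fintype.card_fin, ← one_pow 3] at hdet
  rw [(Odd.pow_inj (by decide)).mp hcube, one_smul] at ha
  exact Subtype.ext (Subtype.ext ha)

theorem center_eq_bot_of_mulEquiv {G H : Type*} [Group G] [Group H] (e : G ≃* H)
    (h : Subgroup.center H = ⊥) : Subgroup.center G = ⊥ := by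
  rw [Subgroup.eq_bot_iff_forall] at h ⊢
  intro x hx
  exact e.injective ((h _ (MulEquivClass.apply_mem_center e hx)).trans (map_one e).symm)

def SO3.toStabSU (a : ℝ) : SO3 →* stabSU (fun _ => a) where
  toFun A := ⟨⟨(A : Matrix (Fin 3) (Fin 3) ℝ).map (↑), map_ofReal_mem_unitaryGroup_iff.mpr A.1.2⟩,
    mem_stabSU_of_map_ofReal_eq rfl A.2 fun _ _ h => absurd rfl h⟩
  map_one' := Subtype.ext <| Subtype.ext <| Matrix.map_one _ rfl rfl
  map_mul' _ _ := Subtype.ext <| Subtype.ext <| Matrix.map_mul (f := Complex.ofRealHom)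

theorem SO3.toStabSU_bijective (a : ℝ) : Function.Bijective (SO3.toStabSU a) := by
  refine ⟨fun A B h => ?_, fun B => ?_⟩
  · exact Subtype.ext <| Subtype.ext <| Matrix.map_injective Complex.ofReal_injective
      (congrArg (fun y : stabSU (fun _ => a) =>
        ((y : unitaryGroup (Fin 3) ℂ) : Matrix (Fin 3) (Fin 3) ℂ)) h)
  · obtain ⟨A, hA, hAB⟩ := exists_map_ofReal_eq_of_mem_stabSU B.2
    obtain ⟨hO, hdet⟩ := mem_specialOrthogonalGroup_iff.mp hA
    exact ⟨⟨⟨A, hO⟩, hdet⟩, Subtype.ext <| Subtype.ext hAB⟩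

theorem eq_pi_div_three_or_eq_two_pi_div_three {x : ℝ} (hx : x ∈ Set.Ioo 0 π) {k : ℤ}
    (hk : 3 * x = k * π) : x = π / 3 ∨ x = 2 * π / 3 := by
  obtain ⟨hx0, hxπ⟩ := hx
  have h0 : 0 < k := by exact_mod_cast (show (0 : ℝ) < k by nlinarith [Real.pi_pos])
  have h3 : k < 3 := by exact_mod_cast (show (k : ℝ) < 3 by nlinarith [Real.pi_pos])
  obtain rfl | rfl : k = 1 ∨ k = 2 := by omega
  · left; push_cast at hk; linarith
  · right; push_cast at hk; linarith

theorem stabilizer_iso_SO3_iff_general (θ : Fin 3 → ℝ)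
    (hθ : ∀ j, θ j ∈ Set.Ioo (0 : ℝ) π)
    (hsum : ∃ k : ℤ, (∑ j, θ j) = k * π) :
    (Nonempty (stabSU θ ≃* SO3) ↔ (θ 0 = θ 1 ∧ θ 1 = θ 2)) ∧
    ((θ 0 = θ 1 ∧ θ 1 = θ 2) → θ 0 = π / 3 ∨ θ 0 = 2 * π / 3) := by
  refine ⟨⟨fun ⟨e⟩ => ?_, fun h => ?_⟩, fun h => ?_⟩
  · by_contra hne
    exact center_stabSU_ne_bot hθ hne (center_eq_bot_of_mulEquiv e center_SO3_eq_bot)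
  · obtain ⟨a, rfl⟩ : ∃ a, θ = fun _ => a :=
      ⟨θ 0, funext fun j => by fin_cases j <;> simp [h.1, h.2]⟩
    exact ⟨(MulEquiv.ofBijective _ (SO3.toStabSU_bijective a)).symm⟩
  · obtain ⟨k, hk⟩ := hsum
    rw [Fin.sum_univ_three, ← h.2, ← h.1] at hk
    exact eq_pi_div_three_or_eq_two_pi_div_three (hθ 0) (by linarith)

/-- For nondecreasing `θ ∈ (0,π)³` with `Σθ ∈ πℤ`, the stabilizer in `SU(3)`
of `(V₀, V_θ)` is isomorphic to `SO(3)` iff `θ₁ = θ₂ = θ₃` (in which case the common angle is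
`π/3` or `2π/3`). -/
theorem stabilizer_iso_SO3_iff (θ : Fin 3 → ℝ)
    (hθ : ∀ j, θ j ∈ Set.Ioo (0 : ℝ) π) (hmono : Monotone θ)
    (hsum : ∃ k : ℤ, (∑ j, θ j) = k * π) :
    (Nonempty (stabSU θ ≃* SO3) ↔ (θ 0 = θ 1 ∧ θ 1 = θ 2)) ∧
    ((θ 0 = θ 1 ∧ θ 1 = θ 2) → θ 0 = π / 3 ∨ θ 0 = 2 * π / 3) :=
  stabilizer_iso_SO3_iff_general θ hθ hsum
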